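/- Let n ≥ 2, r ∈ {1, …, n}, ρ > 0, φ ∈ ℝ, and set θ = πr/(n+1). Define x, y ∈ ℂ^n by x_k = e^{ikφ} ρ^{k/2} sin(kθ) and y_k = e^{ikφ} ρ^{−k/2} sin(kθ). Then the entries of yx* satisfy (yx*)_{k,h} = e^{i(k−h)φ} ρ^{(h−k)/2} sin(kθ) sin(hθ); the arithmetic mean of its main diagonal entries is (n+1)/(2n); the arithmetic mean of its subdiagonal entries (entries (k+1,k), k = 1,…,n−1) is e^{iφ} ρ^{−1/2} ((n+1)/(2(n−1))) cos θ; and the arithmetic mean of its superdiagonal entries (entries (k,k+1), k = 1,…,n−1) is e^{−iφ} ρ^{1/2} ((n+1)/(2(n−1))) cos θ. -/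

import Mathlib

open Finset Complex

lemma geom_zero (n r : ℕ) (hr1 : 1 ≤ r) (hrn : r ≤ n)
    (θ : ℝ) (hθ : θ = Real.pi * r / (n + 1)) :
    ∑ k ∈ range (n + 1), (Complex.exp ((2 * θ : ℝ) * I)) ^ k = 0 := by
  have hn1 : (0:ℝ) < (n:ℝ) + 1 := by positivity
  have hθn : θ * ((n:ℝ) + 1) = Real.pi * r := by
    rw [hθ]; field_simp
  have hθpos : 0 < θ := by
    rw [hθ]
    apply div_pos (mul_pos Real.pi_pos (by exact_mod_cast hr1)) hn1
  have hθlt : θ < Real.pi := by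
    rw [hθ, div_lt_iff₀ hn1]
    have : (r:ℝ) < (n:ℝ) + 1 := by exact_mod_cast Nat.lt_succ_of_le hrn
    nlinarith [Real.pi_pos]
  have hne : Complex.exp ((2 * θ : ℝ) * I) ≠ 1 := by
    intro hone
    rw [Complex.exp_eq_one_iff] at hone
    obtain ⟨m, hm⟩ := hone
    have : ((2 * θ : ℝ) : ℂ) = ((m * (2 * Real.pi) : ℝ) : ℂ) := by
      have hI : (I : ℂ) ≠ 0 := Complex.I_ne_zero
      push_cast
      apply mul_right_cancel₀ hI
      push_cast at hm
      linear_combination hm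
    have h2 : 2 * θ = m * (2 * Real.pi) := by exact_mod_cast this
    have hm0 : (0:ℝ) < m := by nlinarith [Real.pi_pos]
    have hm1 : (m:ℝ) < 1 := by nlinarith [Real.pi_pos]
    have h3 : (0:ℤ) < m := by exact_mod_cast hm0
    have h4 : (m:ℤ) < 1 := by exact_mod_cast hm1
    omega
  have hpow : (Complex.exp ((2 * θ : ℝ) * I)) ^ (n + 1) = 1 := by
    rw [← Complex.exp_nat_mul]
    have h5 : ((n:ℝ) + 1) * (2 * θ) = r * (2 * Real.pi) := by nlinarith [hθn]
    have h6 : (((n:ℕ) + 1 : ℕ) : ℂ) * (((2 * θ : ℝ) : ℂ) * I) = (r : ℤ) * (2 * Real.pi * I) := by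
      have h5c : ((n:ℂ)+1) * (2*(θ:ℂ)) = (r:ℂ) * (2*(Real.pi:ℂ)) := by
        exact_mod_cast congrArg Complex.ofReal h5
      push_cast
      linear_combination I * h5c
    rw [h6, Complex.exp_int_mul_two_pi_mul_I]
  rw [geom_sum_eq hne, hpow]
  simp

lemma cos1 (n r : ℕ) (hr1 : 1 ≤ r) (hrn : r ≤ n)
    (θ : ℝ) (hθ : θ = Real.pi * r / (n + 1)) :
    ∑ k ∈ range n, Real.cos (2 * ((k:ℝ) + 1) * θ) = -1 := by
  have hg := geom_zero n r hr1 hrn θ hθ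
  rw [Finset.sum_range_succ'] at hg
  have h1 : ∑ i ∈ range n, (Complex.exp ((2*θ:ℝ)*I))^(i+1) = -1 := by
    rw [pow_zero] at hg
    linear_combination hg
  have h2 : ∑ k ∈ range n, Real.cos (2 * ((k:ℝ) + 1) * θ) =
      (∑ i ∈ range n, (Complex.exp ((2*θ:ℝ)*I))^(i+1)).re := by
    rw [Complex.re_sum]
    refine Finset.sum_congr rfl fun i _ => ?_
    rw [← Complex.exp_nat_mul,
      show (((i+1:ℕ)):ℂ) * (((2*θ:ℝ):ℂ)*I) = ((2*((i:ℝ)+1)*θ:ℝ):ℂ)*I by push_cast; ring,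
      Complex.exp_ofReal_mul_I_re]
  rw [h2, h1]
  simp

lemma cos2 (n r : ℕ) (hn : 2 ≤ n) (hr1 : 1 ≤ r) (hrn : r ≤ n)
    (θ : ℝ) (hθ : θ = Real.pi * r / (n + 1)) :
    ∑ k ∈ range (n-1), Real.cos ((2 * (k:ℝ) + 3) * θ) = -2 * Real.cos θ := by
  have hθn : θ * ((n:ℝ) + 1) = Real.pi * r := by
    rw [hθ]; field_simp
  have hg := geom_zero n r hr1 hrn θ hθ
  set u := Complex.exp ((2*θ:ℝ)*I) with hu
  have hw : ∑ k ∈ range (n+1), Complex.exp (((2*(k:ℝ)+1)*θ : ℝ) * I) = 0 := by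
    calc ∑ k ∈ range (n+1), Complex.exp (((2*(k:ℝ)+1)*θ : ℝ) * I)
        = ∑ k ∈ range (n+1), Complex.exp ((θ:ℝ)*I) * u ^ k := by
          refine Finset.sum_congr rfl fun k _ => ?_
          rw [hu, ← Complex.exp_nat_mul, ← Complex.exp_add]
          congr 1
          push_cast
          ring
      _ = Complex.exp ((θ:ℝ)*I) * ∑ k ∈ range (n+1), u ^ k := by rw [Finset.mul_sum]
      _ = 0 := by rw [hg, mul_zero]
  -- split: n+1 = ((n-1)+1)+1
  obtain ⟨m, rfl⟩ : ∃ m, n = m + 2 := ⟨n - 2, by omega⟩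
  rw [show m + 2 + 1 = (m + 2) + 1 from rfl, Finset.sum_range_succ,
      show m + 2 = (m + 1) + 1 from rfl, Finset.sum_range_succ'] at hw
  have hlast : Real.cos ((2*((m:ℝ)+2)+1)*θ) = Real.cos θ := by
    have harg : (2*((m:ℝ)+2)+1)*θ = r*(2*Real.pi) - θ := by
      push_cast at hθn ⊢
      nlinarith [hθn]
    have hsin : Real.sin ((r:ℝ)*(2*Real.pi)) = 0 := by
      rw [show (r:ℝ)*(2*Real.pi) = ((2*r:ℕ):ℝ)*Real.pi by push_cast; ring]
      exact Real.sin_nat_mul_pi (2*r)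
    rw [harg, Real.cos_sub, Real.cos_nat_mul_two_pi, hsin]
    ring
  have hre := congrArg Complex.re hw
  simp only [Complex.add_re, Complex.re_sum, Complex.exp_ofReal_mul_I_re, Complex.zero_re] at hre
  have e3 : ∀ x ∈ range (m+1), Real.cos ((2*(((x+1:ℕ)):ℝ)+1)*θ) = Real.cos ((2*(x:ℝ)+3)*θ) := by
    intro x _
    congr 1
    push_cast
    ring
  rw [Finset.sum_congr rfl e3] at hre
  have hlast' : Real.cos ((2*(((m+1+1:ℕ)):ℝ)+1)*θ) = Real.cos θ := by
    rw [show (2*(((m+1+1:ℕ)):ℝ)+1)*θ = (2*((m:ℝ)+2)+1)*θ by push_cast; ring]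
    exact hlast
  rw [hlast'] at hre
  have h0 : Real.cos ((2*((0:ℕ):ℝ)+1)*θ) = Real.cos θ := by norm_num
  rw [h0] at hre
  have hmm : m + 2 - 1 = m + 1 := by omega
  rw [hmm]
  linarith [hre]

lemma sin2sum (n r : ℕ) (hr1 : 1 ≤ r) (hrn : r ≤ n)
    (θ : ℝ) (hθ : θ = Real.pi * r / (n + 1)) :
    ∑ k ∈ range n, Real.sin (((k:ℝ) + 1) * θ) ^ 2 = ((n:ℝ) + 1) / 2 := by
  have h1 := cos1 n r hr1 hrn θ hθ
  have h2 : ∀ k ∈ range n, Real.sin (((k:ℝ) + 1) * θ) ^ 2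
      = 1/2 - Real.cos (2 * ((k:ℝ) + 1) * θ) / 2 := by
    intro k _
    rw [Real.sin_sq, Real.cos_sq]
    ring_nf
  rw [Finset.sum_congr rfl h2, Finset.sum_sub_distrib, Finset.sum_const, ← Finset.sum_div, h1]
  simp
  ring

lemma sinsinsum (n r : ℕ) (hn : 2 ≤ n) (hr1 : 1 ≤ r) (hrn : r ≤ n)
    (θ : ℝ) (hθ : θ = Real.pi * r / (n + 1)) :
    ∑ k ∈ range (n-1), Real.sin (((k:ℝ) + 1) * θ) * Real.sin (((k:ℝ) + 2) * θ)
      = ((n:ℝ) + 1) / 2 * Real.cos θ := by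
  have h1 := cos2 n r hn hr1 hrn θ hθ
  have h2 : ∀ k ∈ range (n-1), Real.sin (((k:ℝ) + 1) * θ) * Real.sin (((k:ℝ) + 2) * θ)
      = Real.cos θ / 2 - Real.cos ((2 * (k:ℝ) + 3) * θ) / 2 := by
    intro k _
    have ha : Real.cos ((2*(k:ℝ)+3)*θ) =
        Real.cos (((k:ℝ)+1)*θ) * Real.cos (((k:ℝ)+2)*θ)
          - Real.sin (((k:ℝ)+1)*θ) * Real.sin (((k:ℝ)+2)*θ) := by
      rw [show (2*(k:ℝ)+3)*θ = ((k:ℝ)+1)*θ + ((k:ℝ)+2)*θ by ring, Real.cos_add]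
    have hc : Real.cos (((k:ℝ)+2)*θ - ((k:ℝ)+1)*θ) = Real.cos θ := by
      congr 1; ring
    rw [Real.cos_sub] at hc
    ring_nf at ha hc ⊢
    linarith [ha, hc]
  rw [Finset.sum_congr rfl h2, Finset.sum_sub_distrib, Finset.sum_const, ← Finset.sum_div, h1]
  have hcard : ((n-1 : ℕ) : ℝ) = (n:ℝ) - 1 := by
    have : 1 ≤ n := by omega
    push_cast [this]
    ring
  simp [hcard]
  ring

section helpers
noncomputable def Faux (ρ φ θ : ℝ) (a b : ℕ) : ℂ :=
  Complex.exp (Complex.I * ((((a:ℕ):ℝ) - ((b:ℕ):ℝ)) * φ : ℝ)) *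
    ((ρ ^ (((((b:ℕ):ℝ) - ((a:ℕ):ℝ))) / 2) : ℝ) : ℂ) *
    ((Real.sin (((a:ℕ) + 1) * θ) : ℝ) : ℂ) *
    ((Real.sin (((b:ℕ) + 1) * θ) : ℝ) : ℂ)

lemma Faux_succ_left (ρ φ θ : ℝ) (k : ℕ) :
    Faux ρ φ θ (k+1) k = Complex.exp (Complex.I * (φ:ℂ)) * ((ρ ^ (-(1/2) : ℝ) : ℝ) : ℂ) *
      (((Real.sin (((k:ℝ)+1)*θ) * Real.sin (((k:ℝ)+2)*θ)) : ℝ) : ℂ) := by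
  unfold Faux
  rw [show ((((k+1:ℕ):ℝ) - ((k:ℕ):ℝ)) * φ : ℝ) = φ by push_cast; ring,
      show (((((k:ℕ):ℝ) - ((k+1:ℕ):ℝ))) / 2 : ℝ) = (-(1/2):ℝ) by push_cast; ring,
      show ((((k+1:ℕ):ℝ) + 1) * θ : ℝ) = ((k:ℝ)+2)*θ by push_cast; ring]
  push_cast
  ring

lemma Faux_succ_right (ρ φ θ : ℝ) (k : ℕ) :
    Faux ρ φ θ k (k+1) = Complex.exp (-(Complex.I * (φ:ℂ))) * ((ρ ^ ((1/2) : ℝ) : ℝ) : ℂ) *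
      (((Real.sin (((k:ℝ)+1)*θ) * Real.sin (((k:ℝ)+2)*θ)) : ℝ) : ℂ) := by
  unfold Faux
  rw [show ((((k:ℕ):ℝ) - ((k+1:ℕ):ℝ)) * φ : ℝ) = -φ by push_cast; ring,
      show (((((k+1:ℕ):ℝ) - ((k:ℕ):ℝ))) / 2 : ℝ) = ((1/2):ℝ) by push_cast; ring,
      show ((((k+1:ℕ):ℝ) + 1) * θ : ℝ) = ((k:ℝ)+2)*θ by push_cast; ring]
  push_cast
  rw [show (Complex.I * -(φ:ℂ)) = -(Complex.I * (φ:ℂ)) by ring]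
  ring

lemma sum_subdiag (n : ℕ) (f : ℕ → ℕ → ℂ) :
    (∑ i ∈ range n, ∑ j ∈ range n, if i = j+1 then f i j else 0)
      = ∑ k ∈ range (n-1), f (k+1) k := by
  rw [Finset.sum_comm]
  have h : ∀ j ∈ range n, (∑ i ∈ range n, if i = j+1 then f i j else 0)
      = if j+1 ∈ range n then f (j+1) j else 0 :=
    fun j _ => Finset.sum_ite_eq' (range n) (j+1) (fun i => f i j)
  rw [Finset.sum_congr rfl h, ← Finset.sum_filter]
  apply Finset.sum_congr _ (fun _ _ => rfl)
  ext j
  simp only [Finset.mem_filter, Finset.mem_range]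
  omega

lemma sum_superdiag (n : ℕ) (f : ℕ → ℕ → ℂ) :
    (∑ i ∈ range n, ∑ j ∈ range n, if j = i+1 then f i j else 0)
      = ∑ k ∈ range (n-1), f k (k+1) := by
  have h : ∀ i ∈ range n, (∑ j ∈ range n, if j = i+1 then f i j else 0)
      = if i+1 ∈ range n then f i (i+1) else 0 :=
    fun i _ => Finset.sum_ite_eq' (range n) (i+1) (fun j => f i j)
  rw [Finset.sum_congr rfl h, ← Finset.sum_filter]
  apply Finset.sum_congr _ (fun _ _ => rfl)
  ext j
  simp only [Finset.mem_filter, Finset.mem_range]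
  omega

lemma fin_double (n : ℕ) (g : ℕ → ℕ → ℂ) :
    (∑ i : Fin n, ∑ j : Fin n, g i j) = ∑ i ∈ range n, ∑ j ∈ range n, g i j := by
  rw [Fin.sum_univ_eq_sum_range (fun i => ∑ j : Fin n, g i j) n]
  exact Finset.sum_congr rfl fun i _ => Fin.sum_univ_eq_sum_range (g i) n
end helpers

open Matrix Complex

/-- Entries and diagonal means of `yx*` for the sine-type eigenvectors
`x_k = e^{ikφ} ρ^{k/2} sin(kθ)`, `y_k = e^{ikφ} ρ^{−k/2} sin(kθ)`, `θ = πr/(n+1)`. -/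
theorem vecMulVec_eigenvector_means (n r : ℕ) (hn : 2 ≤ n) (hr1 : 1 ≤ r) (hrn : r ≤ n)
    (ρ : ℝ) (hρ : 0 < ρ) (φ : ℝ) (θ : ℝ) (hθ : θ = Real.pi * r / (n + 1))
    (x y : Fin n → ℂ)
    (hx : ∀ i : Fin n, x i =
      Complex.exp (Complex.I * ((((i : ℕ) + 1) * φ : ℝ) : ℂ)) *
        ((ρ ^ ((((i : ℕ) + 1) : ℝ) / 2) : ℝ) : ℂ) *
        ((Real.sin (((i : ℕ) + 1) * θ) : ℝ) : ℂ))
    (hy : ∀ i : Fin n, y i =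
      Complex.exp (Complex.I * ((((i : ℕ) + 1) * φ : ℝ) : ℂ)) *
        ((ρ ^ ((-(((i : ℕ) + 1) : ℝ)) / 2) : ℝ) : ℂ) *
        ((Real.sin (((i : ℕ) + 1) * θ) : ℝ) : ℂ)) :
    (∀ i j : Fin n, vecMulVec y (star x) i j =
      Complex.exp (Complex.I * (((((i : ℕ) : ℝ) - ((j : ℕ) : ℝ)) * φ : ℝ) : ℂ)) *
        ((ρ ^ (((((j : ℕ) : ℝ) - ((i : ℕ) : ℝ))) / 2) : ℝ) : ℂ) *
        ((Real.sin (((i : ℕ) + 1) * θ) : ℝ) : ℂ) *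
        ((Real.sin (((j : ℕ) + 1) * θ) : ℝ) : ℂ)) ∧
    ((1 : ℂ) / n) * (∑ i : Fin n, vecMulVec y (star x) i i) =
      (((n : ℂ) + 1) / (2 * n)) ∧
    ((1 : ℂ) / ((n : ℂ) - 1)) *
        (∑ i : Fin n, ∑ j : Fin n,
          if (i : ℕ) = (j : ℕ) + 1 then vecMulVec y (star x) i j else 0) =
      Complex.exp (Complex.I * (φ : ℂ)) * ((ρ ^ (-(1 / 2) : ℝ) : ℝ) : ℂ) *
        (((n : ℂ) + 1) / (2 * ((n : ℂ) - 1))) * ((Real.cos θ : ℝ) : ℂ) ∧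
    ((1 : ℂ) / ((n : ℂ) - 1)) *
        (∑ i : Fin n, ∑ j : Fin n,
          if (j : ℕ) = (i : ℕ) + 1 then vecMulVec y (star x) i j else 0) =
      Complex.exp (-(Complex.I * (φ : ℂ))) * ((ρ ^ ((1 / 2) : ℝ) : ℝ) : ℂ) *
        (((n : ℂ) + 1) / (2 * ((n : ℂ) - 1))) * ((Real.cos θ : ℝ) : ℂ) := by
  have hn0 : (n : ℂ) ≠ 0 := Nat.cast_ne_zero.mpr (by omega)
  have hn1 : (n : ℂ) - 1 ≠ 0 := by
    rw [sub_ne_zero]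
    exact_mod_cast (by omega : n ≠ 1)
  -- entry formula
  have key : ∀ i j : Fin n, vecMulVec y (star x) i j = Faux ρ φ θ (i : ℕ) (j : ℕ) := by
    intro i j
    rw [Matrix.vecMulVec_apply, Pi.star_apply, hy i, hx j, RCLike.star_def, _root_.map_mul,
        _root_.map_mul, ← Complex.exp_conj, _root_.map_mul, Complex.conj_I]
    simp only [Complex.conj_ofReal]
    unfold Faux
    have hexp : Complex.exp (Complex.I * ((((i:ℕ) + 1) * φ : ℝ) : ℂ)) *
        Complex.exp (-Complex.I * ((((j:ℕ) + 1) * φ : ℝ) : ℂ)) =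
        Complex.exp (Complex.I * (((((i:ℕ):ℝ) - ((j:ℕ):ℝ)) * φ : ℝ) : ℂ)) := by
      rw [← Complex.exp_add]
      congr 1
      push_cast
      ring
    have hrpow : (ρ ^ ((-(((i:ℕ):ℝ) + 1)) / 2) : ℝ) * (ρ ^ (((((j:ℕ):ℝ) + 1)) / 2) : ℝ)
        = ρ ^ (((((j:ℕ):ℝ) - ((i:ℕ):ℝ))) / 2) := by
      rw [← Real.rpow_add hρ]
      congr 1
      ring
    rw [← hexp, ← hrpow]
    push_cast
    ring
  refine ⟨key, ?_, ?_, ?_⟩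
  · -- diagonal
    have diag : ∀ i : Fin n, vecMulVec y (star x) i i
        = ((Real.sin ((((i:ℕ):ℝ) + 1) * θ) ^ 2 : ℝ) : ℂ) := by
      intro i
      rw [key i i]
      unfold Faux
      rw [show (((((i:ℕ):ℝ) - ((i:ℕ):ℝ)) * φ) : ℝ) = 0 by ring,
          show ((((((i:ℕ):ℝ) - ((i:ℕ):ℝ))) / 2) : ℝ) = 0 by ring,
          Real.rpow_zero]
      push_cast
      simp [sq]
    rw [Finset.sum_congr rfl (fun i _ => diag i),
        Fin.sum_univ_eq_sum_range (fun k => ((Real.sin (((k:ℝ) + 1) * θ) ^ 2 : ℝ) : ℂ)) n,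
        ← Complex.ofReal_sum, sin2sum n r hr1 hrn θ hθ]
    push_cast
    field_simp
  · -- subdiagonal
    have hS : (∑ i : Fin n, ∑ j : Fin n,
        if (i : ℕ) = (j : ℕ) + 1 then vecMulVec y (star x) i j else 0)
        = ∑ i ∈ range n, ∑ j ∈ range n, if i = j + 1 then Faux ρ φ θ i j else 0 := by
      simp only [key]
      exact fin_double n (fun a b => if a = b + 1 then Faux ρ φ θ a b else 0)
    rw [hS, sum_subdiag n (Faux ρ φ θ),
        Finset.sum_congr rfl (fun k _ => Faux_succ_left ρ φ θ k),
        ← Finset.mul_sum, ← Complex.ofReal_sum, sinsinsum n r hn hr1 hrn θ hθ]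
    push_cast
    field_simp
  · -- superdiagonal
    have hS : (∑ i : Fin n, ∑ j : Fin n,
        if (j : ℕ) = (i : ℕ) + 1 then vecMulVec y (star x) i j else 0)
        = ∑ i ∈ range n, ∑ j ∈ range n, if j = i + 1 then Faux ρ φ θ i j else 0 := by
      simp only [key]
      exact fin_double n (fun a b => if b = a + 1 then Faux ρ φ θ a b else 0)
    rw [hS, sum_superdiag n (Faux ρ φ θ),
        Finset.sum_congr rfl (fun k _ => Faux_succ_right ρ φ θ k),
        ← Finset.mul_sum, ← Complex.ofReal_sum, sinsinsum n r hn hr1 hrn θ hθ]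
    push_cast
    field_simp
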